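/- Let a, b, k > 0, y > 0 and z > 0. With h₀(y,z) = yz/k, h₁(y,z) = (z−b)/k² + z(a+y²)(y−z)/(k²y), and h₂(y,z) = (1/(k³y³))[by(−y(1+a+y²) + 2(a+y²)z) + z(ay(y + 2y³ + z − 6y²z) + a²(y² − 2yz − z²) + y³(−2z + y(3 + y² − 4yz + z²)))], the second-order matching identity of the invariance equation for the 3D Sel'kov system holds: k·h₂(y,z)·y + (∂h₀/∂y)(y,z)·h₀(y,z) + (∂h₁/∂y)(y,z)·(az + y²z − y) + (∂h₁/∂z)(y,z)·(−az − y²z + b) = 0, where ∂/∂y and ∂/∂z denote partial derivatives. -/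

import Mathlib

noncomputable def Selkovh0 (k : ℝ) (y z : ℝ) : ℝ := y * z / k

noncomputable def Selkovh1 (a b k : ℝ) (y z : ℝ) : ℝ :=
  (z - b) / k ^ 2 + z * (a + y ^ 2) * (y - z) / (k ^ 2 * y)

noncomputable def Selkovh2 (a b k : ℝ) (y z : ℝ) : ℝ :=
  (b * y * (-y * (1 + a + y ^ 2) + 2 * (a + y ^ 2) * z) +
    z * (a * y * (y + 2 * y ^ 3 + z - 6 * y ^ 2 * z) +
      a ^ 2 * (y ^ 2 - 2 * y * z - z ^ 2) +
      y ^ 3 * (-2 * z + y * (3 + y ^ 2 - 4 * y * z + z ^ 2)))) / (k ^ 3 * y ^ 3)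

lemma hasDerivAt_selkovh0_y (k y z : ℝ) :
    HasDerivAt (fun y' => Selkovh0 k y' z) (z / k) y :=
  ((hasDerivAt_id' y).mul_const z).div_const k |>.congr_deriv (by rw [one_mul])

lemma hasDerivAt_selkovh1_y (a b k z : ℝ) {y : ℝ} (hy : y ≠ 0) :
    HasDerivAt (fun y' => Selkovh1 a b k y' z) (z * (2 * y - z + a * z / y ^ 2) / k ^ 2) y := by
  have hq : HasDerivAt (fun y' => (a + y' ^ 2) * (y' - z) / y') (2 * y - z + a * z / y ^ 2) y :=
    (((hasDerivAt_pow 2 y).const_add a).fun_mul ((hasDerivAt_id' y).sub_const z)).fun_div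
      (hasDerivAt_id' y) hy |>.congr_deriv (by field_simp; ring)
  have hf : (fun y' => Selkovh1 a b k y' z) =
      fun y' => (z - b) / k ^ 2 + z / k ^ 2 * ((a + y' ^ 2) * (y' - z) / y') := by
    funext y'
    simp only [Selkovh1]
    ring
  rw [hf]
  exact ((hq.const_mul _).const_add _).congr_deriv (by ring)

lemma hasDerivAt_selkovh1_z (a b k y z : ℝ) :
    HasDerivAt (fun z' => Selkovh1 a b k y z') ((1 + (a + y ^ 2) * (y - 2 * z) / y) / k ^ 2) z := by
  have hq : HasDerivAt (fun z' => z' * (y - z')) (y - 2 * z) z :=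
    (hasDerivAt_id' z).fun_mul ((hasDerivAt_id' z).const_sub y) |>.congr_deriv (by ring)
  have hf : (fun z' => Selkovh1 a b k y z') =
      fun z' => (z' - b + (a + y ^ 2) / y * (z' * (y - z'))) / k ^ 2 := by
    funext z'
    simp only [Selkovh1]
    ring
  rw [hf]
  exact ((((hasDerivAt_id' z).sub_const b).add (hq.const_mul _)).div_const _).congr_deriv
    (by ring)

theorem selkov_second_order_matching_general (a b k y z : ℝ)
    (hk : 0 < k) (hy : 0 < y) :
    k * Selkovh2 a b k y z * y +
      deriv (fun y' : ℝ => Selkovh0 k y' z) y * Selkovh0 k y z +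
      deriv (fun y' : ℝ => Selkovh1 a b k y' z) y * (a * z + y ^ 2 * z - y) +
      deriv (fun z' : ℝ => Selkovh1 a b k y z') z * (-a * z - y ^ 2 * z + b) = 0 := by
  rw [(hasDerivAt_selkovh0_y k y z).deriv, (hasDerivAt_selkovh1_y a b k z hy.ne').deriv,
    (hasDerivAt_selkovh1_z a b k y z).deriv]
  simp only [Selkovh0, Selkovh2]
  field_simp
  ring

/-- Second-order matching identity of the invariance equation for the 3D Sel'kov system. -/
theorem selkov_second_order_matching (a b k y z : ℝ)
    (ha : 0 < a) (hb : 0 < b) (hk : 0 < k) (hy : 0 < y) (hz : 0 < z) :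
    k * Selkovh2 a b k y z * y +
      deriv (fun y' : ℝ => Selkovh0 k y' z) y * Selkovh0 k y z +
      deriv (fun y' : ℝ => Selkovh1 a b k y' z) y * (a * z + y ^ 2 * z - y) +
      deriv (fun z' : ℝ => Selkovh1 a b k y z') z * (-a * z - y ^ 2 * z + b) = 0 :=
  selkov_second_order_matching_general a b k y z hk hy
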